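/- Let C ⊆ D be compact subsets of Y and let R₁ be a J-unbounded connected component of Y ∖ J·C. Then there exists a J-unbounded connected component R₂ of Y ∖ J·D with R₂ ⊆ R₁. -/
import Mathlib


open Pointwise

/-- `U` is a connected component of the subspace `F` (of the ambient space `X`). -/
def IsComponentOf {X : Type*} [TopologicalSpace X] (F U : Set X) : Prop :=
  ∃ x ∈ F, U = connectedComponentIn F x

/-- For `A ⊆ Y`, `orbitUnion J A` is `J·A = ⋃_{j ∈ J} j • A`. -/
def orbitUnion (J : Type*) {Y : Type*} [SMul J Y] (A : Set Y) : Set Y :=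
  ⋃ j : J, j • A

/-- A subset of `Y` is `J`-bounded if it is contained in `J·D` for some compact `D ⊆ Y`. -/
def JBounded (J : Type*) {Y : Type*} [TopologicalSpace Y] [SMul J Y] (S : Set Y) : Prop :=
  ∃ D : Set Y, IsCompact D ∧ S ⊆ orbitUnion J D

section aux

open Set

variable {Y : Type*} {J : Type*} [Group J] [MulAction J Y]

lemma mem_orbitUnion {A : Set Y} {x : Y} : x ∈ orbitUnion J A ↔ ∃ j : J, x ∈ j • A :=
  Set.mem_iUnion

lemma orbitUnion_mono {A B : Set Y} (h : A ⊆ B) : orbitUnion J A ⊆ orbitUnion J B :=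
  Set.iUnion_mono fun j => Set.smul_set_mono h

lemma subset_orbitUnion (A : Set Y) : A ⊆ orbitUnion J A := fun x hx =>
  Set.mem_iUnion.2 ⟨1, by simpa using hx⟩

lemma smul_orbitUnion (g : J) (A : Set Y) : g • orbitUnion J A = orbitUnion J A := by
  ext x
  simp only [orbitUnion, Set.smul_set_iUnion, Set.mem_iUnion]
  constructor
  · rintro ⟨j, hj⟩
    rw [smul_smul] at hj
    exact ⟨g * j, hj⟩
  · rintro ⟨j, hj⟩
    refine ⟨g⁻¹ * j, ?_⟩
    rw [smul_smul, mul_inv_cancel_left]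
    exact hj

lemma smul_orbitUnion_compl (g : J) (A : Set Y) :
    g • (orbitUnion J A)ᶜ = (orbitUnion J A)ᶜ := by
  rw [Set.smul_set_compl, smul_orbitUnion]

variable [TopologicalSpace Y] [ContinuousConstSMul J Y]

lemma isOpen_orbitUnion {A : Set Y} (hA : IsOpen A) : IsOpen (orbitUnion J A) :=
  isOpen_iUnion fun j => hA.smul j

lemma isClosed_orbitUnion [LocallyCompactSpace Y] [T2Space Y]
    (hpd : ∀ K : Set Y, IsCompact K → {j : J | ((j • K) ∩ K).Nonempty}.Finite)
    {K : Set Y} (hK : IsCompact K) : IsClosed (orbitUnion J K) := by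
  rw [← isOpen_compl_iff, isOpen_iff_mem_nhds]
  intro y hy
  obtain ⟨M, hMcomp, hMnhds⟩ := exists_compact_mem_nhds y
  have hTfin : {j : J | ((j • K) ∩ M).Nonempty}.Finite := by
    apply (hpd (K ∪ M) (hK.union hMcomp)).subset
    rintro j ⟨z, hz1, hz2⟩
    exact ⟨z, Set.smul_set_mono Set.subset_union_left hz1, Set.mem_union_right _ hz2⟩
  have hBclosed : IsClosed (⋃ j ∈ {j : J | ((j • K) ∩ M).Nonempty}, j • K) :=
    hTfin.isClosed_biUnion fun j _ => ((hK.smul j).isClosed)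
  have hyB : y ∉ ⋃ j ∈ {j : J | ((j • K) ∩ M).Nonempty}, j • K := by
    intro hyB
    obtain ⟨j, _, hj⟩ := Set.mem_iUnion₂.1 hyB
    exact hy (Set.mem_iUnion.2 ⟨j, hj⟩)
  have hV : interior M ∩ (⋃ j ∈ {j : J | ((j • K) ∩ M).Nonempty}, j • K)ᶜ ∈ nhds y :=
    Filter.inter_mem (interior_mem_nhds.2 hMnhds) (hBclosed.isOpen_compl.mem_nhds hyB)
  refine Filter.mem_of_superset hV ?_
  rintro z ⟨hz1, hz2⟩ hz3
  obtain ⟨j, hj⟩ := Set.mem_iUnion.1 hz3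
  exact hz2 (Set.mem_iUnion₂.2 ⟨j, ⟨z, hj, interior_subset hz1⟩, hj⟩)

lemma smul_connectedComponentIn (g : J) (F : Set Y) (x : Y) :
    g • connectedComponentIn F x = connectedComponentIn (g • F) (g • x) := by
  have key : ∀ (h : J) (G : Set Y) (z : Y), z ∈ G →
      h • connectedComponentIn G z ⊆ connectedComponentIn (h • G) (h • z) := by
    intro h G z hz
    have := (continuous_const_smul h : Continuous fun w : Y => h • w).image_connectedComponentIn_subset hz
    simpa [Set.image_smul] using this
  by_cases hx : x ∈ F
  · apply subset_antisymm (key g F x hx)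
    have h2 := key g⁻¹ (g • F) (g • x) (Set.smul_mem_smul_set hx)
    rw [inv_smul_smul, inv_smul_smul] at h2
    calc connectedComponentIn (g • F) (g • x)
        = g • (g⁻¹ • connectedComponentIn (g • F) (g • x)) := by rw [smul_inv_smul]
      _ ⊆ g • connectedComponentIn F x := Set.smul_set_mono h2
  · rw [connectedComponentIn_eq_empty hx,
      connectedComponentIn_eq_empty (fun h => hx (by simpa using Set.smul_mem_smul_set_iff.1 h))]
    simp

end aux

/-- Let `Y` be a connected, locally compact, locally connected, Hausdorff space, and let the
group `J` act on `Y` by homeomorphisms, freely and properly discontinuously.  Let `C ⊆ D` be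
compact subsets of `Y` and let `R₁` be a `J`-unbounded connected component of `Y ∖ J·C`.
Then there is a `J`-unbounded connected component `R₂` of `Y ∖ J·D` with `R₂ ⊆ R₁`. -/
theorem stmt10 {Y : Type*} [TopologicalSpace Y] [ConnectedSpace Y]
    [LocallyCompactSpace Y] [LocallyConnectedSpace Y] [T2Space Y]
    {J : Type*} [Group J] [MulAction J Y]
    (hcont : ∀ j : J, Continuous fun y : Y => j • y)
    (hfree : ∀ (j : J) (y : Y), j • y = y → j = 1)
    (hpd : ∀ K : Set Y, IsCompact K → {j : J | ((j • K) ∩ K).Nonempty}.Finite)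
    (C D : Set Y) (hC : IsCompact C) (hD : IsCompact D) (hCD : C ⊆ D)
    (R₁ : Set Y) (hR₁ : IsComponentOf (orbitUnion J C)ᶜ R₁)
    (hR₁unb : ¬ JBounded J R₁) :
    ∃ R₂ : Set Y, IsComponentOf (orbitUnion J D)ᶜ R₂ ∧ ¬ JBounded J R₂ ∧ R₂ ⊆ R₁ := by
  classical
  haveI : ContinuousConstSMul J Y := ⟨hcont⟩
  -- trivial case `D = ∅`
  rcases eq_or_ne D ∅ with rfl | hDne
  · obtain rfl : C = ∅ := Set.subset_empty_iff.1 hCD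
    exact ⟨R₁, hR₁, hR₁unb, subset_rfl⟩
  have hDne' : D.Nonempty := Set.nonempty_iff_ne_empty.2 hDne
  set W : Set Y := (orbitUnion J D)ᶜ with hWdef
  obtain ⟨L, hLcomp, hDL⟩ := exists_compact_superset hD
  have hEDclosed : IsClosed (orbitUnion J D) := isClosed_orbitUnion hpd hD
  have hELclosed : IsClosed (orbitUnion J L) := isClosed_orbitUnion hpd hLcomp
  have hEintLopen : IsOpen (orbitUnion J (interior L)) := isOpen_orbitUnion isOpen_interior
  have hED_int : orbitUnion J D ⊆ orbitUnion J (interior L) := orbitUnion_mono hDL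
  have hint_EL : orbitUnion J (interior L) ⊆ orbitUnion J L := orbitUnion_mono interior_subset
  have hWopen : IsOpen W := hEDclosed.isOpen_compl
  have hWinv : ∀ g : J, g • W = W := fun g => smul_orbitUnion_compl g D
  have hWC : W ⊆ (orbitUnion J C)ᶜ := Set.compl_subset_compl.2 (orbitUnion_mono hCD)
  -- Lemma A : a component of `W` not contained in `J·L` meets `J·(L \ interior L)`
  -- at a point outside `J·(interior L)`.
  have lemA : ∀ x ∈ W, ¬ connectedComponentIn W x ⊆ orbitUnion J L →
      ∃ u ∈ connectedComponentIn W x,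
        u ∈ orbitUnion J (L \ interior L) ∧ u ∉ orbitUnion J (interior L) := by
    intro x hx hnsub
    set U := connectedComponentIn W x with hUdef
    obtain ⟨y, hyU, hyL⟩ := Set.not_subset.1 hnsub
    by_cases hUL : (U ∩ orbitUnion J L).Nonempty
    · by_contra hno
      push_neg at hno
      have hsub : U ⊆ orbitUnion J (interior L) ∪ (orbitUnion J L)ᶜ := by
        intro u hu
        by_cases h1 : u ∈ orbitUnion J L
        · left
          obtain ⟨j, l, hl, rfl⟩ := mem_orbitUnion.1 h1
          by_cases h2 : l ∈ interior L
          · exact Set.mem_iUnion.2 ⟨j, Set.smul_mem_smul_set h2⟩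
          · exact hno _ hu (Set.mem_iUnion.2 ⟨j, Set.smul_mem_smul_set ⟨hl, h2⟩⟩)
        · exact Or.inr h1
      obtain ⟨u0, hu0U, hu0L⟩ := hUL
      have hu0int : u0 ∈ orbitUnion J (interior L) := by
        rcases hsub hu0U with h | h
        · exact h
        · exact absurd hu0L h
      obtain ⟨w, hwU, hw1, hw2⟩ := isPreconnected_connectedComponentIn
        (orbitUnion J (interior L)) ((orbitUnion J L)ᶜ) hEintLopen hELclosed.isOpen_compl
        hsub ⟨u0, hu0U, hu0int⟩ ⟨y, hyU, hyL⟩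
      exact hw2 (hint_EL hw1)
    · exfalso
      rw [Set.not_nonempty_iff_eq_empty] at hUL
      have hxU : x ∈ U := mem_connectedComponentIn hx
      have hclosed : closure U ⊆ U := by
        intro z hz
        have hzW : z ∈ W := by
          by_contra hzW
          have hzE : z ∈ orbitUnion J (interior L) :=
            hED_int (Set.notMem_compl_iff.1 hzW)
          obtain ⟨u, hu1, hu2⟩ := (mem_closure_iff.1 hz _ hEintLopen hzE)
          exact Set.eq_empty_iff_forall_notMem.1 hUL u ⟨hu2, hint_EL hu1⟩
        have hins : IsPreconnected (insert z U) :=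
          isPreconnected_connectedComponentIn.subset_closure (Set.subset_insert z U)
            (Set.insert_subset hz subset_closure)
        have : insert z U ⊆ connectedComponentIn W x :=
          hins.subset_connectedComponentIn (Set.mem_insert_of_mem z hxU)
            (Set.insert_subset hzW (connectedComponentIn_subset W x))
        exact this (Set.mem_insert z U)
      have hUclopen : IsClopen U :=
        ⟨isClosed_of_closure_subset hclosed, hWopen.connectedComponentIn⟩
      have hUuniv : U = Set.univ := hUclopen.eq_univ ⟨x, hxU⟩
      obtain ⟨d, hd⟩ := hDne'
      have hdU : d ∈ U := by rw [hUuniv]; exact Set.mem_univ d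
      have hdW : d ∈ W := connectedComponentIn_subset W x hdU
      exact hdW (subset_orbitUnion D hd)
  -- extract R₁ as a component
  obtain ⟨x₀, hx₀, rfl⟩ := hR₁
  -- components of W meeting R₁ are contained in R₁
  have hmeet : ∀ x ∈ W, x ∈ connectedComponentIn (orbitUnion J C)ᶜ x₀ →
      connectedComponentIn W x ⊆ connectedComponentIn (orbitUnion J C)ᶜ x₀ := by
    intro x hxW hxR
    rw [connectedComponentIn_eq hxR]
    exact isPreconnected_connectedComponentIn.subset_connectedComponentIn
      (mem_connectedComponentIn hxW)
      ((connectedComponentIn_subset W x).trans hWC)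
  -- finiteness: cover F := L \ interior L
  set F : Set Y := L \ interior L with hFdef
  have hFcomp : IsCompact F := hLcomp.diff isOpen_interior
  set cov : Y → Set Y := fun y =>
    if y ∈ W then connectedComponentIn W y else orbitUnion J (interior L) with hcovdef
  have hcovopen : ∀ y : Y, IsOpen (cov y) := by
    intro y
    simp only [hcovdef]
    split_ifs
    · exact hWopen.connectedComponentIn
    · exact hEintLopen
  have hcovcov : F ⊆ ⋃ y : Y, cov y := by
    intro f hf
    refine Set.mem_iUnion.2 ⟨f, ?_⟩
    simp only [hcovdef]
    split_ifs with h
    · exact mem_connectedComponentIn h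
    · exact hED_int (Set.notMem_compl_iff.1 h)
  obtain ⟨t, ht⟩ := hFcomp.elim_finite_subcover cov hcovopen hcovcov
  -- Lemma B: components not inside J·L are translates of finitely many components
  have lemB : ∀ x ∈ W, ¬ connectedComponentIn W x ⊆ orbitUnion J L →
      ∃ g : J, ∃ y ∈ t, y ∈ W ∧
        g • connectedComponentIn W x = connectedComponentIn W y := by
    intro x hxW hnsub
    obtain ⟨u, huU, huF, huint⟩ := lemA x hxW hnsub
    obtain ⟨g₀, l, hlF, rfl⟩ := mem_orbitUnion.1 huF
    refine ⟨g₀⁻¹, ?_⟩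
    have hlW : l ∈ W := by
      have : g₀⁻¹ • (g₀ • l) ∈ g₀⁻¹ • W :=
        Set.smul_mem_smul_set (connectedComponentIn_subset W x huU)
      rwa [inv_smul_smul, hWinv] at this
    have hlint : l ∉ orbitUnion J (interior L) := by
      intro hl
      apply huint
      have : g₀ • l ∈ g₀ • orbitUnion J (interior L) := Set.smul_mem_smul_set hl
      rwa [smul_orbitUnion] at this
    obtain ⟨y, hyt, hly⟩ := Set.mem_iUnion₂.1 (ht hlF)
    have hyW : y ∈ W := by
      by_contra hyW
      simp only [hcovdef, if_neg hyW] at hly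
      exact hlint hly
    refine ⟨y, hyt, hyW, ?_⟩
    simp only [hcovdef, if_pos hyW] at hly
    have h1 : g₀⁻¹ • connectedComponentIn W x = connectedComponentIn W (g₀⁻¹ • (g₀ • l)) := by
      rw [connectedComponentIn_eq huU, smul_connectedComponentIn, hWinv]
    rw [h1, inv_smul_smul, ← connectedComponentIn_eq hly]
  -- main argument by contradiction
  by_contra hcon
  push_neg at hcon
  have hbdd : ∀ x ∈ W, connectedComponentIn W x ⊆ connectedComponentIn (orbitUnion J C)ᶜ x₀ →
      JBounded J (connectedComponentIn W x) := by
    intro x hxW hsub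
    by_contra hVunb
    exact (hcon (connectedComponentIn W x) ⟨x, hxW, rfl⟩ hVunb) hsub
  -- bounded pieces of components indexed by t
  set K : Y → Set Y := fun y =>
    if h : JBounded J (connectedComponentIn W y) then h.choose else ∅ with hKdef
  have hKcomp : ∀ y : Y, IsCompact (K y) := by
    intro y
    simp only [hKdef]
    split_ifs with h
    · exact h.choose_spec.1
    · exact isCompact_empty
  have hKsub : ∀ y : Y, JBounded J (connectedComponentIn W y) →
      connectedComponentIn W y ⊆ orbitUnion J (K y) := by
    intro y h
    simp only [hKdef, dif_pos h]
    exact h.choose_spec.2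
  -- the total compact set
  set K₀ : Set Y := D ∪ L ∪ ⋃ y ∈ t, K y with hK₀def
  have hK₀comp : IsCompact K₀ := (hD.union hLcomp).union
    (t.finite_toSet.isCompact_biUnion fun y _ => hKcomp y)
  apply hR₁unb
  refine ⟨K₀, hK₀comp, ?_⟩
  intro z hzR
  by_cases hzW : z ∈ W
  · have hVsub : connectedComponentIn W z ⊆ connectedComponentIn (orbitUnion J C)ᶜ x₀ :=
      hmeet z hzW hzR
    have hzV : z ∈ connectedComponentIn W z := mem_connectedComponentIn hzW
    by_cases hVL : connectedComponentIn W z ⊆ orbitUnion J L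
    · exact orbitUnion_mono (fun w hw => Or.inl (Or.inr hw)) (hVL hzV)
    · obtain ⟨g, y, hyt, hyW, hgV⟩ := lemB z hzW hVL
      have hyb : JBounded J (connectedComponentIn W y) := by
        obtain ⟨Kv, hKv, hKvs⟩ := hbdd z hzW hVsub
        refine ⟨Kv, hKv, ?_⟩
        rw [← hgV]
        intro w hw
        obtain ⟨v, hv, rfl⟩ := hw
        have : g • v ∈ g • orbitUnion J Kv := Set.smul_mem_smul_set (hKvs hv)
        rwa [smul_orbitUnion] at this
      have hzVy : g • z ∈ connectedComponentIn W y := hgV ▸ Set.smul_mem_smul_set hzV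
      have : g • z ∈ orbitUnion J (K y) := hKsub y hyb hzVy
      have h2 : g⁻¹ • (g • z) ∈ g⁻¹ • orbitUnion J (K y) := Set.smul_mem_smul_set this
      rw [inv_smul_smul, smul_orbitUnion] at h2
      exact orbitUnion_mono (fun w hw => Or.inr (Set.mem_biUnion hyt hw)) h2
  · exact orbitUnion_mono (fun w hw => Or.inl (Or.inl hw))
      (Set.notMem_compl_iff.1 hzW)
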